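/- Let A > 0 and ε > 0, and define φ : ℝ → ℝ by φ(h) = (A/(2ε⁴)) h² − A/ε² for h < ε and φ(h) = −(A/2) h^{−2} for h ≥ ε. Define φ₊(h) = (A/(2ε⁴)) h² and φ₋ = φ − φ₊ (so φ₋(h) = −A/ε² for h < ε and φ₋(h) = −(A/2) h^{−2} − (A/(2ε⁴)) h² for h ≥ ε). Then φ₊ is convex on ℝ and φ₋ is concave on ℝ, so φ = φ₊ + φ₋ is a convex–concave splitting of the regularised interface potential. -/

import Mathlib

/-!
For `h ≥ ε` the difference `φ - φ₊` is the outer branch `g(x) = -(A/2)x⁻² - φ₊(x)`, and for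
`h < ε` it is the constant `-A/ε² = g(ε)`. Hence `φ₋(h) = g(max h ε)`, and a function that is concave
and decreasing on `[ε, ∞)`, composed with the convex map `h ↦ max h ε`, is concave.
-/

/-- The regularised interface potential: quadratic for `h < ε`, `-(A/2) h⁻²` for `h ≥ ε`. -/
noncomputable def phiReg (A ε : ℝ) : ℝ → ℝ :=
  fun h => if h < ε then A / (2 * ε^4) * h^2 - A / ε^2 else -(A / 2) / h^2

/-- The contractive (convex) component of the splitting. -/
noncomputable def phiPlus (A ε : ℝ) : ℝ → ℝ :=
  fun h => A / (2 * ε^4) * h^2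

open Set

theorem ConcaveOn.comp_max_const {𝕜 β : Type*} [Field 𝕜] [LinearOrder 𝕜] [IsStrictOrderedRing 𝕜]
    [AddCommMonoid β] [PartialOrder β] [IsOrderedAddMonoid β] [Module 𝕜 β] [PosSMulMono 𝕜 β]
    {g : 𝕜 → β} {a : 𝕜} (hg : ConcaveOn 𝕜 (Ici a) g) (hg' : AntitoneOn g (Ici a)) :
    ConcaveOn 𝕜 univ fun x => g (max x a) := by
  have himage : (fun x => max x a) '' univ = Ici a := by
    ext y
    simp only [image_univ, mem_range, mem_Ici]
    exact ⟨fun ⟨x, hx⟩ => hx ▸ le_max_right x a, fun hy => ⟨y, max_eq_left hy⟩⟩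
  rw [← himage] at hg hg'
  exact hg.comp_convexOn ((convexOn_id convex_univ).sup (convexOn_const a convex_univ)) hg'

theorem phiPlus_convexOn {A : ℝ} (hA : 0 ≤ A) (ε : ℝ) : ConvexOn ℝ univ (phiPlus A ε) :=
  (even_two.convexOn_pow).smul (by positivity)

theorem concaveOn_neg_div_sq_sub_phiPlus {A : ℝ} (hA : 0 ≤ A) (ε : ℝ) :
    ConcaveOn ℝ (Ioi 0) fun x => -(A / 2) / x ^ 2 - phiPlus A ε x := by
  have hinv : ConcaveOn ℝ (Ioi 0) fun x : ℝ => -(A / 2) / x ^ 2 :=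
    (((convexOn_zpow (-2)).smul (by positivity : 0 ≤ A / 2)).neg).congr fun x _ => by
      simp [zpow_neg, div_eq_mul_inv]
  exact hinv.sub ((phiPlus_convexOn hA ε).subset (subset_univ _) (convex_Ioi 0))

theorem antitoneOn_neg_div_sq_sub_phiPlus {A ε : ℝ} (hA : 0 ≤ A) (hε : 0 < ε) :
    AntitoneOn (fun x => -(A / 2) / x ^ 2 - phiPlus A ε x) (Ici ε) := by
  intro x hx y hy hxy
  simp only [mem_Ici] at hx hy
  have hx0 : 0 < x := hε.trans_le hx
  have hy0 : 0 < y := hε.trans_le hy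
  have hε4 : ε ^ 4 ≤ x ^ 2 * y ^ 2 := by
    calc ε ^ 4 = ε ^ 2 * ε ^ 2 := by ring
      _ ≤ x ^ 2 * y ^ 2 := by gcongr
  have key : A / 2 * (1 / x ^ 2 - 1 / y ^ 2) ≤ A / (2 * ε ^ 4) * (y ^ 2 - x ^ 2) := by
    have hd : 0 ≤ y ^ 2 - x ^ 2 := by nlinarith
    calc A / 2 * (1 / x ^ 2 - 1 / y ^ 2) = A / (2 * (x ^ 2 * y ^ 2)) * (y ^ 2 - x ^ 2) := by
          field_simp
      _ ≤ A / (2 * ε ^ 4) * (y ^ 2 - x ^ 2) := by gcongr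
  simp only [phiPlus]
  have hdiff : -(A / 2) / y ^ 2 - A / (2 * ε ^ 4) * y ^ 2
      - (-(A / 2) / x ^ 2 - A / (2 * ε ^ 4) * x ^ 2)
      = A / 2 * (1 / x ^ 2 - 1 / y ^ 2) - A / (2 * ε ^ 4) * (y ^ 2 - x ^ 2) := by ring
  linarith

theorem phiReg_sub_phiPlus_eq {A ε : ℝ} (hε : ε ≠ 0) (h : ℝ) :
    phiReg A ε h - phiPlus A ε h = -(A / 2) / max h ε ^ 2 - phiPlus A ε (max h ε) := by
  rcases lt_or_ge h ε with hh | hh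
  · rw [max_eq_right hh.le]
    simp only [phiReg, phiPlus, if_pos hh]
    field_simp
    ring
  · rw [max_eq_left hh]
    simp only [phiReg, if_neg (not_lt.mpr hh)]

/-- Convex–concave splitting of the regularised interface potential:
`φ₊(h) = (A/(2ε⁴))h²` is convex on `ℝ` and `φ₋ = φ - φ₊` is concave on `ℝ`. -/
theorem phiReg_convex_concave_splitting (A ε : ℝ) (hA : 0 < A) (hε : 0 < ε) :
    ConvexOn ℝ Set.univ (phiPlus A ε) ∧
      ConcaveOn ℝ Set.univ (fun h => phiReg A ε h - phiPlus A ε h) := by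
  refine ⟨phiPlus_convexOn hA.le ε, ?_⟩
  have hconc := ((concaveOn_neg_div_sq_sub_phiPlus hA.le ε).subset
    (Ici_subset_Ioi.mpr hε) (convex_Ici ε)).comp_max_const
    (antitoneOn_neg_div_sq_sub_phiPlus hA.le hε)
  exact hconc.congr fun h _ => (phiReg_sub_phiPlus_eq hε.ne' h).symm
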